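/- Bias-variance decomposition for Bregman divergences: for independent X-valued random variables Y (label) and X (prediction), E D_F[Y||X] = E D_F[Y||E Y] + D_F[E Y || ℰX] + E D_F[ℰX || X], where ℰX = ∇F^{-1}(E ∇F(X)). -/

import Mathlib

/-!
Expanding the definition gives the pointwise four-point identity
`D(y,x) = D(y,m) + D(m,e) + D(e,x) + ⟪∇F m - ∇F e, y - m⟫ + ⟪∇F x - ∇F e, e - y⟫`.
Take `m = E Y` and `e = ℰX`. The first cross term then has mean zero because `E Y = m`; the
second has mean `⟪E ∇F(X) - ∇F e, e - E Y⟫ = 0` because `Y` and `X` are independent and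
`∇F e = E ∇F(X)`.
-/

open MeasureTheory ProbabilityTheory
open scoped InnerProductSpace

section Bregman

variable {E : Type*} [NormedAddCommGroup E] [InnerProductSpace ℝ E]

def bregmanDiv (F : E → ℝ) (f' : E → E) (y x : E) : ℝ :=
  F y - F x - ⟪f' x, y - x⟫_ℝ

theorem bregmanDiv_four_point (F : E → ℝ) (f' : E → E) (y x m e : E) :
    bregmanDiv F f' y x
      = bregmanDiv F f' y m + bregmanDiv F f' m e + bregmanDiv F f' e x
        + ⟪f' m - f' e, y - m⟫_ℝ + ⟪f' x - f' e, e - y⟫_ℝ := by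
  simp only [bregmanDiv, inner_sub_left, inner_sub_right]
  ring

theorem measurable_gradient [CompleteSpace E] [MeasurableSpace E] [BorelSpace E] (F : E → ℝ) :
    Measurable (gradient F) :=
  (InnerProductSpace.toDual ℝ E).symm.continuous.measurable.comp (measurable_fderiv ℝ F)

end Bregman

section Expectation

variable {E : Type*} [NormedAddCommGroup E] [InnerProductSpace ℝ E] [MeasurableSpace E]
  [BorelSpace E] {Ω : Type*} [MeasurableSpace Ω] {μ : Measure Ω}

theorem ProbabilityTheory.IndepFun.integrable_inner {U V : Ω → E} (hUV : IndepFun U V μ)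
    (hU : Integrable U μ) (hV : Integrable V μ) :
    Integrable (fun ω => ⟪U ω, V ω⟫_ℝ) μ :=
  hUV.integrable_bilin hU hV (innerSL ℝ)

theorem ProbabilityTheory.IndepFun.integral_inner [CompleteSpace E] {U V : Ω → E}
    (hUV : IndepFun U V μ) (hU : Integrable U μ) (hV : Integrable V μ) :
    ∫ ω, ⟪U ω, V ω⟫_ℝ ∂μ = ⟪∫ ω, U ω ∂μ, ∫ ω, V ω ∂μ⟫_ℝ :=
  hUV.integral_bilin hU hV (innerSL ℝ)

theorem integral_bregmanDiv_eq_bias_add_variance [CompleteSpace E] [IsProbabilityMeasure μ]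
    {F : E → ℝ} {f' : E → E} {Y X : Ω → E} {e : E}
    (hindep : IndepFun Y (fun ω => f' (X ω)) μ) (hY : Integrable Y μ)
    (hfX : Integrable (fun ω => f' (X ω)) μ) (he : f' e = ∫ ω, f' (X ω) ∂μ)
    (hbias : Integrable (fun ω => bregmanDiv F f' (Y ω) (∫ ω', Y ω' ∂μ)) μ)
    (hvar : Integrable (fun ω => bregmanDiv F f' e (X ω)) μ) :
    ∫ ω, bregmanDiv F f' (Y ω) (X ω) ∂μ
      = (∫ ω, bregmanDiv F f' (Y ω) (∫ ω', Y ω' ∂μ) ∂μ)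
        + bregmanDiv F f' (∫ ω', Y ω' ∂μ) e + ∫ ω, bregmanDiv F f' e (X ω) ∂μ := by
  set m := ∫ ω, Y ω ∂μ
  have hYm : Integrable (fun ω => Y ω - m) μ := hY.sub (integrable_const m)
  have hYm_zero : ∫ ω, (Y ω - m) ∂μ = 0 := by
    rw [integral_sub hY (integrable_const m), integral_const, probReal_univ, one_smul, sub_self]
  have hfXe : Integrable (fun ω => f' (X ω) - f' e) μ := hfX.sub (integrable_const _)
  have hfXe_zero : ∫ ω, (f' (X ω) - f' e) ∂μ = 0 := by
    rw [integral_sub hfX (integrable_const _), integral_const, probReal_univ, one_smul, he,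
      sub_self]
  have heY : Integrable (fun ω => e - Y ω) μ := (integrable_const e).sub hY
  have hcross : IndepFun (fun ω => f' (X ω) - f' e) (fun ω => e - Y ω) μ :=
    hindep.symm.comp (continuous_id.sub continuous_const).measurable
      (continuous_const.sub continuous_id).measurable
  calc ∫ ω, bregmanDiv F f' (Y ω) (X ω) ∂μ
      = ∫ ω, (bregmanDiv F f' (Y ω) m + bregmanDiv F f' m e + bregmanDiv F f' e (X ω)
          + ⟪f' m - f' e, Y ω - m⟫_ℝ + ⟪f' (X ω) - f' e, e - Y ω⟫_ℝ) ∂μ :=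
        congrArg _ (funext fun ω => bregmanDiv_four_point F f' (Y ω) (X ω) m e)
    _ = (∫ ω, bregmanDiv F f' (Y ω) m ∂μ) + bregmanDiv F f' m e
          + ∫ ω, bregmanDiv F f' e (X ω) ∂μ + ⟪f' m - f' e, ∫ ω, (Y ω - m) ∂μ⟫_ℝ
          + ⟪∫ ω, (f' (X ω) - f' e) ∂μ, ∫ ω, (e - Y ω) ∂μ⟫_ℝ := by
        have hbias_cross := hYm.const_inner (𝕜 := ℝ) (f' m - f' e)
        have h₂ := hbias.add (integrable_const (bregmanDiv F f' m e))
        have h₃ := h₂.add hvar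
        rw [integral_add _ (hcross.integrable_inner hfXe heY), integral_add _ hbias_cross,
          integral_add _ hvar, integral_add hbias (integrable_const _), integral_const,
          probReal_univ, one_smul, integral_inner hYm, hcross.integral_inner hfXe heY]
        exacts [h₂, h₃, h₃.add hbias_cross]
    _ = _ := by rw [hYm_zero, hfXe_zero, inner_zero_left, inner_zero_right, add_zero, add_zero]

end Expectation

theorem bregman_bias_variance_decomposition_general {d : ℕ}
    (S : Set (EuclideanSpace ℝ (Fin d)))
    (F : EuclideanSpace ℝ (Fin d) → ℝ)
    (f' : EuclideanSpace ℝ (Fin d) → EuclideanSpace ℝ (Fin d))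
    (hdiff : ∀ x ∈ S, HasGradientAt F (f' x) x)
    (D : EuclideanSpace ℝ (Fin d) → EuclideanSpace ℝ (Fin d) → ℝ)
    (hD : ∀ y x, D y x = F y - F x - ((inner ℝ (f' x) (y - x) : ℝ)))
    {Ω : Type*} [MeasurableSpace Ω] (μ : Measure Ω) [IsProbabilityMeasure μ]
    (Y X : Ω → EuclideanSpace ℝ (Fin d))
    (hindep : IndepFun Y X μ)
    (hXS : ∀ᵐ ω ∂μ, X ω ∈ S)
    (hYint : Integrable Y μ)
    (hdint : Integrable (fun ω => f' (X ω)) μ)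
    (EX : EuclideanSpace ℝ (Fin d))
    (hrange : f' EX = ∫ ω, f' (X ω) ∂μ)
    (hintBayes : Integrable (fun ω => D (Y ω) (∫ ω', Y ω' ∂μ)) μ)
    (hintVar : Integrable (fun ω => D EX (X ω)) μ) :
    ∫ ω, D (Y ω) (X ω) ∂μ
      = (∫ ω, D (Y ω) (∫ ω', Y ω' ∂μ) ∂μ)
        + D (∫ ω', Y ω' ∂μ) EX
        + ∫ ω, D EX (X ω) ∂μ := by
  obtain rfl : D = bregmanDiv F f' := funext fun y => funext (hD y)
  -- `f'` need not be measurable, but along `X` it agrees a.e. with the measurable `∇F`.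
  have hgrad : (fun ω => gradient F (X ω)) =ᵐ[μ] fun ω => f' (X ω) := by
    filter_upwards [hXS] with ω hω using (hdiff _ hω).gradient
  have hindep' : IndepFun Y (fun ω => f' (X ω)) μ :=
    (hindep.comp measurable_id (measurable_gradient F)).congr (ae_eq_refl Y) hgrad
  exact integral_bregmanDiv_eq_bias_add_variance hindep' hYint hdint hrange hintBayes hintVar

/-- Bias-variance decomposition for Bregman divergences: for independent label `Y` and
prediction `X`, `E D_F[Y‖X] = E D_F[Y‖E Y] + D_F[E Y ‖ ℰX] + E D_F[ℰX ‖ X]`. -/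
theorem bregman_bias_variance_decomposition {d : ℕ}
    (S : Set (EuclideanSpace ℝ (Fin d))) (hSc : IsClosed S) (hSv : Convex ℝ S)
    (F : EuclideanSpace ℝ (Fin d) → ℝ)
    (f' g : EuclideanSpace ℝ (Fin d) → EuclideanSpace ℝ (Fin d))
    (hF : StrictConvexOn ℝ S F)
    (hdiff : ∀ x ∈ S, HasGradientAt F (f' x) x)
    (hg : ∀ x ∈ S, g (f' x) = x)
    (D : EuclideanSpace ℝ (Fin d) → EuclideanSpace ℝ (Fin d) → ℝ)
    (hD : ∀ y x, D y x = F y - F x - ((inner ℝ (f' x) (y - x) : ℝ)))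
    {Ω : Type*} [MeasurableSpace Ω] (μ : Measure Ω) [IsProbabilityMeasure μ]
    (Y X : Ω → EuclideanSpace ℝ (Fin d))
    (hYm : AEMeasurable Y μ) (hXm : AEMeasurable X μ)
    (hindep : IndepFun Y X μ)
    (hYS : ∀ᵐ ω ∂μ, Y ω ∈ S) (hXS : ∀ᵐ ω ∂μ, X ω ∈ S)
    (hYint : Integrable Y μ) (hXint : Integrable X μ)
    (hFYint : Integrable (fun ω => F (Y ω)) μ)
    (hFXint : Integrable (fun ω => F (X ω)) μ)
    (hdint : Integrable (fun ω => f' (X ω)) μ)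
    (hEY : (∫ ω, Y ω ∂μ) ∈ S)
    (EX : EuclideanSpace ℝ (Fin d))
    (hEX : EX = g (∫ ω, f' (X ω) ∂μ))
    (hrange : f' EX = ∫ ω, f' (X ω) ∂μ) (hmem : EX ∈ S)
    (hintYX : Integrable (fun ω => D (Y ω) (X ω)) μ)
    (hintBayes : Integrable (fun ω => D (Y ω) (∫ ω', Y ω' ∂μ)) μ)
    (hintVar : Integrable (fun ω => D EX (X ω)) μ) :
    ∫ ω, D (Y ω) (X ω) ∂μ
      = (∫ ω, D (Y ω) (∫ ω', Y ω' ∂μ) ∂μ)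
        + D (∫ ω', Y ω' ∂μ) EX
        + ∫ ω, D EX (X ω) ∂μ :=
  bregman_bias_variance_decomposition_general S F f' hdiff D hD μ Y X hindep hXS hYint hdint EX
    hrange hintBayes hintVar
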